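/- Let U = {x ∈ ℝ^N : x_N ≤ γ(x')} be a subgraph where γ : ℝ^{N−1} → ℝ satisfies sup{ |γ(x') − γ(y')| : x', y' ∈ ℝ^{N−1}, |x'−y'| ≤ 1 } < +∞. Then for every ρ > 0, the Hausdorff distance d_H(U, U_ρ) between U and its positive-distance-interior U_ρ = {x ∈ U : dist(x, ∂U) ≥ ρ} is finite. -/

import Mathlib

open Filter Metric Topology

/-- The first `n` coordinates of a point of `ℝ^{n+1}`. -/
noncomputable def firstCoords (n : ℕ) (x : EuclideanSpace ℝ (Fin (n + 1))) :
    EuclideanSpace ℝ (Fin n) :=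
  WithLp.toLp 2 (fun i : Fin n => x i.castSucc)

/-- The subgraph `U = {x = (x', x_N) : x_N ≤ γ(x')}` of `γ : ℝ^{N-1} → ℝ`. -/
def subgraphSet (n : ℕ) (γ : EuclideanSpace ℝ (Fin n) → ℝ) :
    Set (EuclideanSpace ℝ (Fin (n + 1))) :=
  {x | x (Fin.last n) ≤ γ (firstCoords n x)}

/-! A function whose oscillation is at most `K` at scale `1` has oscillation at most `m K` at
scale `m`; so a point lying `⌈ρ⌉₊ K + ρ` below the graph is the centre of a ball of radius
`ρ` inside the subgraph, hence at distance at least `ρ` from its boundary. Lowering every point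
of the subgraph by `⌈ρ⌉₊ (K + 1)` thus lands in `U_ρ`, which bounds the Hausdorff distance. -/

section Oscillation

variable {E F : Type*} [NormedAddCommGroup E] [NormedSpace ℝ E] [PseudoMetricSpace F]

theorem dist_apply_le_nat_mul_of_dist_le_one {f : E → F} {K : ℝ}
    (hf : ∀ x y, dist x y ≤ 1 → dist (f x) (f y) ≤ K) (m : ℕ) {x y : E}
    (hxy : dist x y ≤ m) : dist (f x) (f y) ≤ m * K := by
  induction m generalizing x with
  | zero =>
    obtain rfl : x = y := dist_le_zero.mp (by simpa using hxy)
    simp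
  | succ m ih =>
    have hm : (1 : ℝ) ≤ m + 1 := by simp
    have hxy' : dist x y ≤ m + 1 := by simpa using hxy
    set z := AffineMap.lineMap x y ((m + 1 : ℝ)⁻¹)
    have hxz : dist x z ≤ 1 := by
      rw [dist_comm, dist_lineMap_left, Real.norm_of_nonneg (by positivity),
        inv_mul_le_iff₀ (by positivity)]
      simpa using hxy'
    have hzy : dist z y ≤ m := by
      have hc : 0 ≤ 1 - (m + 1 : ℝ)⁻¹ := sub_nonneg.2 (inv_le_one_of_one_le₀ hm)
      calc dist z y = (1 - (m + 1 : ℝ)⁻¹) * dist x y := by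
            rw [dist_lineMap_right, Real.norm_of_nonneg hc]
        _ ≤ (1 - (m + 1 : ℝ)⁻¹) * (m + 1) := by gcongr
        _ = m := by field_simp; ring
    calc dist (f x) (f y) ≤ dist (f x) (f z) + dist (f z) (f y) := dist_triangle _ _ _
      _ ≤ K + m * K := add_le_add (hf x z hxz) (ih hzy)
      _ = (m + 1 : ℕ) * K := by push_cast; ring

end Oscillation

theorem le_infDist_frontier_of_ball_subset {X : Type*} [PseudoMetricSpace X] {s : Set X}
    (hs : (frontier s).Nonempty) {x : X} {r : ℝ} (hball : ball x r ⊆ s) :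
    r ≤ infDist x (frontier s) := by
  refine (le_infDist hs).2 fun w hw => not_lt.1 fun hwx => ?_
  exact hw.2 (interior_maximal hball isOpen_ball (mem_ball'.2 hwx))

theorem dist_firstCoords_le {n : ℕ} (x y : EuclideanSpace ℝ (Fin (n + 1))) :
    dist (firstCoords n x) (firstCoords n y) ≤ dist x y := by
  rw [EuclideanSpace.dist_eq, EuclideanSpace.dist_eq, Fin.sum_univ_castSucc]
  exact Real.sqrt_le_sqrt (le_add_of_nonneg_right (sq_nonneg _))

section Lowering

variable {n : ℕ} (x : EuclideanSpace ℝ (Fin (n + 1))) (c : ℝ)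

@[simp]
theorem firstCoords_sub_single_last :
    firstCoords n (x - EuclideanSpace.single (Fin.last n) c) = firstCoords n x := by
  ext i
  simp [firstCoords]

theorem sub_single_last_mem_subgraphSet_iff {γ : EuclideanSpace ℝ (Fin n) → ℝ} :
    x - EuclideanSpace.single (Fin.last n) c ∈ subgraphSet n γ ↔
      x (Fin.last n) - c ≤ γ (firstCoords n x) := by
  simp [subgraphSet]

end Lowering

theorem frontier_subgraphSet_nonempty (n : ℕ) (γ : EuclideanSpace ℝ (Fin n) → ℝ) :
    (frontier (subgraphSet n γ)).Nonempty := by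
  set c := γ (firstCoords n 0)
  refine nonempty_frontier_iff.2
    ⟨⟨_, (sub_single_last_mem_subgraphSet_iff 0 (-c)).2 (by simp [c])⟩, fun h => ?_⟩
  have := (sub_single_last_mem_subgraphSet_iff 0 (-c - 1)).1 (h ▸ Set.mem_univ _)
  simp only [zero_sub, PiLp.zero_apply] at this
  linarith

theorem ball_subset_subgraphSet {n : ℕ} {γ : EuclideanSpace ℝ (Fin n) → ℝ} {K : ℝ}
    (hK : ∀ x' y', dist x' y' ≤ 1 → dist (γ x') (γ y') ≤ K)
    {x : EuclideanSpace ℝ (Fin (n + 1))} {r : ℝ}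
    (hx : x (Fin.last n) ≤ γ (firstCoords n x) - (⌈r⌉₊ * K + r)) :
    ball x r ⊆ subgraphSet n γ := by
  intro y hy
  have hγ : dist (γ (firstCoords n y)) (γ (firstCoords n x)) ≤ ⌈r⌉₊ * K :=
    dist_apply_le_nat_mul_of_dist_le_one hK _
      (((dist_firstCoords_le y x).trans (mem_ball.1 hy).le).trans (Nat.le_ceil r))
  have hlast : dist (y (Fin.last n)) (x (Fin.last n)) ≤ r :=
    (PiLp.dist_apply_le y x _).trans (mem_ball.1 hy).le
  rw [Real.dist_eq, abs_le] at hγ hlast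
  show y (Fin.last n) ≤ γ (firstCoords n y)
  linarith [hγ.1, hlast.2]

theorem subgraph_hausdorffEdist_interior_ne_top_general (n : ℕ)
    (γ : EuclideanSpace ℝ (Fin n) → ℝ)
    (hosc : ∃ K : ℝ, ∀ x' y' : EuclideanSpace ℝ (Fin n),
      dist x' y' ≤ 1 → |γ x' - γ y'| ≤ K)
    (ρ : ℝ) :
    EMetric.hausdorffEdist (subgraphSet n γ)
      {x ∈ subgraphSet n γ |
        ρ ≤ Metric.infDist x (frontier (subgraphSet n γ))} ≠ ⊤ := by
  obtain ⟨K, hK⟩ := hosc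
  replace hK : ∀ x' y', dist x' y' ≤ 1 → dist (γ x') (γ y') ≤ K := fun x' y' h =>
    (Real.dist_eq _ _).trans_le (hK x' y' h)
  have hK0 : 0 ≤ K := dist_nonneg.trans (hK 0 0 (by simp))
  set C : ℝ := ⌈ρ⌉₊ * (K + 1)
  have hC0 : 0 ≤ C := by positivity
  refine ne_top_of_le_ne_top (ENNReal.ofReal_ne_top (r := C))
    (hausdorffEDist_le_of_mem_edist (fun x hx => ?_) fun x hx => ⟨x, hx.1, by simp⟩)
  replace hx : x (Fin.last n) ≤ γ (firstCoords n x) := hx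
  refine ⟨x - EuclideanSpace.single (Fin.last n) C,
    ⟨(sub_single_last_mem_subgraphSet_iff x C).2 (by linarith), ?_⟩, ?_⟩
  · refine le_infDist_frontier_of_ball_subset (frontier_subgraphSet_nonempty n γ)
      (ball_subset_subgraphSet hK ?_)
    simp only [firstCoords_sub_single_last, PiLp.sub_apply, PiLp.single_apply, if_true]
    linarith [Nat.le_ceil ρ, show C = ⌈ρ⌉₊ * K + ⌈ρ⌉₊ by ring]
  · rw [edist_dist, dist_self_sub_right, PiLp.norm_single, Real.norm_of_nonneg hC0]

/-- if `γ` has uniformly bounded local oscillations,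
i.e. `sup{|γ(x') − γ(y')| : |x'−y'| ≤ 1} < +∞`, then for every `ρ > 0` the Hausdorff
distance between the subgraph `U` of `γ` and its positive-distance-interior
`U_ρ = {x ∈ U : dist(x, ∂U) ≥ ρ}` is finite. -/
theorem subgraph_hausdorffEdist_interior_ne_top (n : ℕ) (hn : 1 ≤ n)
    (γ : EuclideanSpace ℝ (Fin n) → ℝ)
    (hosc : ∃ K : ℝ, ∀ x' y' : EuclideanSpace ℝ (Fin n),
      dist x' y' ≤ 1 → |γ x' - γ y'| ≤ K)
    (ρ : ℝ) (hρ : 0 < ρ) :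
    EMetric.hausdorffEdist (subgraphSet n γ)
      {x ∈ subgraphSet n γ |
        ρ ≤ Metric.infDist x (frontier (subgraphSet n γ))} ≠ ⊤ :=
  subgraph_hausdorffEdist_interior_ne_top_general n γ hosc ρ
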